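/- arXiv:2312.13701 — 2 statements merged into one kernel-verified Lean document; each statement's English description precedes it below -/
import Mathlib

section
/- Let C be a binary projective three-weight linear code of length n, dimension k and minimum distance d, with A_n(C) = 1. Then for each w ∈ {d, n − d}, the codewords of weight w in C hold a 2-(n, w, λ_w) design, where λ_w satisfies λ_w·n·(n − 1) = (2^{k−1} − 1)·w·(w − 1); that is, every 2-element set of coordinate positions is contained in the supports of exactly λ_w = (2^{k−1} − 1)·w·(w − 1)/(n·(n − 1)) codewords of C of weight w. -/
/-- Hamming weight of a binary vector: the number of nonzero coordinates. -/
noncomputable def wt {ι : Type*} (c : ι → ZMod 2) : ℕ := Nat.card {i : ι // c i ≠ 0}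

/-- Number of codewords of Hamming weight `w` in a set of binary vectors. -/
noncomputable def weightCount {ι : Type*} (C : Set (ι → ZMod 2)) (w : ℕ) : ℕ :=
  Nat.card {c : ι → ZMod 2 // c ∈ C ∧ wt c = w}

/-- The dual code: all vectors orthogonal (standard inner product) to every codeword. -/
def dualCode {ι : Type*} (C : Set (ι → ZMod 2)) : Set (ι → ZMod 2) :=
  {x | ∀ c ∈ C, ∑ᶠ i, x i * c i = 0}

/-- A code is projective if the minimum distance of its dual is at least 3. -/
def IsProjective {ι : Type*} (C : Set (ι → ZMod 2)) : Prop :=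
  ∀ x ∈ dualCode C, x ≠ 0 → 3 ≤ wt x

/-- `d` is the minimum distance of `C`: the least Hamming weight of a nonzero codeword. -/
def IsMinDist {ι : Type*} (C : Set (ι → ZMod 2)) (d : ℕ) : Prop :=
  (∃ c ∈ C, c ≠ 0 ∧ wt c = d) ∧ ∀ c ∈ C, c ≠ 0 → d ≤ wt c

/-- The number of nonzero Hamming weights occurring among codewords of `C`. -/
noncomputable def numNonzeroWeights {ι : Type*} (C : Set (ι → ZMod 2)) : ℕ :=
  Nat.card {i : ℕ | 1 ≤ i ∧ weightCount C i ≠ 0}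

/-- The codewords of weight `w` in `C` hold a 2-design with index `lam`: every pair of
distinct coordinate positions lies in the support of exactly `lam` codewords of weight `w`. -/
def HoldsTwoDesign {ι : Type*} (C : Set (ι → ZMod 2)) (w lam : ℕ) : Prop :=
  ∀ p q : ι, p ≠ q →
    Nat.card {c : ι → ZMod 2 // c ∈ C ∧ wt c = w ∧ c p ≠ 0 ∧ c q ≠ 0} = lam


/-!
Projectivity says that no nonzero dual word has weight at most 2, so restricting the codewords to
one or two coordinates is onto: exactly `2^(k-1)` codewords are nonzero at a given coordinate and
`2^(k-2)` at a given pair. Because the all-one word lies in `C`, complementation `c ↦ c + 1`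
exchanges the weights `w` and `n - w`, and the nonzero weights are `d`, `n - d` and `n` with
`d ≠ n - d`.

Fix a coordinate `p`. Counting the codewords nonzero at `p`, and double counting the pairs
`(c, q)` with `c` nonzero at `p` and `q`, gives two independent linear equations for the numbers
of weight-`d` and weight-`(n - d)` words nonzero at `p`; so these numbers do not depend on `p`.
For a pair `{p, q}`, complementation and inclusion–exclusion express the number of weight-`w`
words nonzero at `p` and `q` through those point counts, so it is constant as well. The usual
double count `λ n (n - 1) = A_w w (w - 1)`, with `A_w = 2^(k-1) - 1`, then gives the index.
-/

open Finset

section BinaryWords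

variable {ι : Type*}

lemma wt_eq_hammingNorm [Fintype ι] (c : ι → ZMod 2) : wt c = hammingNorm c := by
  rw [wt, Nat.card_eq_fintype_card, Fintype.card_subtype, hammingNorm]

lemma hammingNorm_add_one [Fintype ι] (c : ι → ZMod 2) :
    hammingNorm (c + 1) = Fintype.card ι - hammingNorm c := by
  have hflip : ∀ a : ZMod 2, a + 1 ≠ 0 ↔ ¬a ≠ 0 := by decide
  have hsplit := card_filter_add_card_filter_not (s := univ) (fun i => c i ≠ 0)
  rw [card_univ] at hsplit
  simp only [hammingNorm, Pi.add_apply, Pi.one_apply, hflip]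
  omega

lemma eq_one_of_hammingNorm_eq_card [Fintype ι] {c : ι → ZMod 2}
    (h : hammingNorm c = Fintype.card ι) : c = 1 := by
  have hc : c + 1 = 0 := by
    rw [← hammingNorm_eq_zero, hammingNorm_add_one, h, Nat.sub_self]
  have hbit : ∀ a : ZMod 2, a + 1 = 0 → a = 1 := by decide
  exact funext fun i => hbit _ (congrFun hc i)

lemma weightCount_ne_zero_iff [Finite ι] (C : Set (ι → ZMod 2)) (w : ℕ) :
    weightCount C w ≠ 0 ↔ ∃ c ∈ C, wt c = w := by
  rw [weightCount, Nat.card_ne_zero, and_iff_left Subtype.finite, nonempty_subtype]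

end BinaryWords

section Counting

variable {ι β : Type*} [Fintype ι] [DecidableEq ι] [Zero β] [DecidableEq β]

def coveringWords (X : Finset (ι → β)) (w : ℕ) (s : Finset ι) : Finset (ι → β) :=
  {c ∈ X | hammingNorm c = w ∧ ∀ i ∈ s, c i ≠ 0}

def avoidingWords (X : Finset (ι → β)) (w : ℕ) (s : Finset ι) : Finset (ι → β) :=
  {c ∈ X | hammingNorm c = w ∧ ∀ i ∈ s, c i = 0}

variable (X : Finset (ι → β)) (w : ℕ)

theorem sum_card_coveringWords_insert (s : Finset ι) :
    ∑ i ∈ sᶜ, #(coveringWords X w (insert i s)) = (w - #s) * #(coveringWords X w s) := by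
  have hinsert : ∀ i, coveringWords X w (insert i s) =
      (coveringWords X w s).bipartiteBelow (fun c i => c i ≠ 0) i := fun i => by
    ext c
    simp only [coveringWords, bipartiteBelow, mem_filter, forall_mem_insert]
    tauto
  have hsupport : ∀ c ∈ coveringWords X w s,
      #(sᶜ.bipartiteAbove (fun c i => c i ≠ 0) c) = w - #s := fun c hc => by
    obtain ⟨-, hcw, hcs⟩ := mem_filter.1 hc
    rw [← hcw, hammingNorm, ← card_sdiff_of_subset fun i hi => mem_filter.2 ⟨mem_univ i, hcs i hi⟩]
    congr 1
    ext i
    simp [bipartiteAbove, and_comm]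
  simp_rw [hinsert, ← sum_card_bipartiteAbove_eq_sum_card_bipartiteBelow]
  rw [sum_congr rfl hsupport, sum_const, smul_eq_mul, mul_comm]

theorem card_mul_eq_of_card_coveringWords_pair {lam : ℕ}
    (hlam : ∀ p q, p ≠ q → #(coveringWords X w {p, q}) = lam) :
    lam * (Fintype.card ι * (Fintype.card ι - 1)) = #(coveringWords X w ∅) * (w * (w - 1)) := by
  have hpair : ∀ p, ∑ q ∈ {p}ᶜ, #(coveringWords X w (insert q {p})) = (Fintype.card ι - 1) * lam :=
    fun p => by
      rw [sum_congr rfl fun q hq => hlam q p (by simpa using hq), sum_const, card_compl,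
        card_singleton, smul_eq_mul]
  have hpoint := sum_card_coveringWords_insert X w ∅
  rw [compl_empty, card_empty, Nat.sub_zero] at hpoint
  calc lam * (Fintype.card ι * (Fintype.card ι - 1))
      = ∑ p, ∑ q ∈ {p}ᶜ, #(coveringWords X w (insert q {p})) := by
        simp_rw [hpair, sum_const, card_univ, smul_eq_mul]; ring
    _ = (w - 1) * ∑ p, #(coveringWords X w {p}) := by
        simp_rw [sum_card_coveringWords_insert, card_singleton, mul_sum]
    _ = #(coveringWords X w ∅) * (w * (w - 1)) := by
        simp_rw [← insert_empty, hpoint]; ring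

theorem card_avoidingWords_singleton_add (p : ι) :
    #(avoidingWords X w {p}) + #(coveringWords X w {p}) = #(coveringWords X w ∅) := by
  simp only [avoidingWords, coveringWords, mem_singleton, forall_eq, card_filter,
    ← sum_add_distrib, notMem_empty, IsEmpty.forall_iff, implies_true, and_true]
  refine sum_congr rfl fun c _ => ?_
  by_cases hw : hammingNorm c = w <;> by_cases hp : c p = 0 <;> simp [hw, hp]

theorem card_avoidingWords_pair_add (p q : ι) :
    #(avoidingWords X w {p, q}) + #(coveringWords X w {p}) + #(coveringWords X w {q}) =
      #(coveringWords X w ∅) + #(coveringWords X w {p, q}) := by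
  simp only [avoidingWords, coveringWords, forall_mem_insert, mem_singleton, forall_eq,
    card_filter, ← sum_add_distrib, notMem_empty, IsEmpty.forall_iff, implies_true, and_true]
  refine sum_congr rfl fun c _ => ?_
  by_cases hw : hammingNorm c = w <;> by_cases hp : c p = 0 <;> by_cases hq : c q = 0 <;>
    simp [hw, hp, hq]

end Counting

section Restriction

variable {ι : Type*} [Fintype ι] [DecidableEq ι] (C : Submodule (ZMod 2) (ι → ZMod 2))

theorem surjective_restrict_of_card_lt_wt_dual (s : Finset ι)
    (hs : ∀ x ∈ dualCode (C : Set (ι → ZMod 2)), x ≠ 0 → #s < wt x) :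
    Function.Surjective ((LinearMap.funLeft (ZMod 2) (ZMod 2) ((↑) : s → ι)).comp C.subtype) := by
  set ρ := LinearMap.funLeft (ZMod 2) (ZMod 2) ((↑) : s → ι)
  rw [← LinearMap.range_eq_top]
  by_contra hne
  -- A functional `f` vanishing on the image yields the dual word `x`, supported in `s`.
  obtain ⟨f, hf0, hle⟩ := (LinearMap.range (ρ ∘ₗ C.subtype)).exists_le_ker_of_lt_top
    (lt_top_iff_ne_top.2 hne)
  set x : ι → ZMod 2 := fun j => f (ρ fun i => if j = i then 1 else 0)
  have hfρ : ∀ y, f (ρ y) = ∑ j, x j * y j := fun y => by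
    rw [← LinearMap.comp_apply, LinearMap.pi_apply_eq_sum_univ]
    exact sum_congr rfl fun j _ => by rw [smul_eq_mul, mul_comm]; rfl
  have hx_dual : x ∈ dualCode (C : Set (ι → ZMod 2)) := fun c hc => by
    rw [finsum_eq_sum_of_fintype, ← hfρ]
    exact hle ⟨⟨c, hc⟩, rfl⟩
  have hx0 : x ≠ 0 := by
    rintro hx
    refine hf0 (LinearMap.ext fun v => ?_)
    obtain ⟨y, rfl⟩ :=
      LinearMap.funLeft_surjective_of_injective (ZMod 2) (ZMod 2) _ Subtype.val_injective v
    exact (hfρ y).trans (by simp [hx])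
  have hx_wt : wt x ≤ #s := by
    rw [wt_eq_hammingNorm, hammingNorm]
    refine card_le_card fun j hj => ?_
    by_contra hjs
    refine (mem_filter.1 hj).2 ?_
    have hρ : (ρ fun i => if j = i then 1 else 0) = 0 := by
      ext i
      have hji : j ≠ i := fun h => hjs (h ▸ i.2)
      simp [ρ, LinearMap.funLeft, hji]
    simp [x, hρ]
  exact (hs x hx_dual hx0).not_ge hx_wt

theorem card_filter_forall_ne_zero_mul_two_pow [DecidablePred (· ∈ C)] (s : Finset ι)
    (hs : ∀ x ∈ dualCode (C : Set (ι → ZMod 2)), x ≠ 0 → #s < wt x) :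
    #{c | c ∈ C ∧ ∀ i ∈ s, c i ≠ 0} * 2 ^ #s = Fintype.card C := by
  set φ := ((LinearMap.funLeft (ZMod 2) (ZMod 2) ((↑) : s → ι)).comp C.subtype).toAddMonoidHom
  have hφ : Function.Surjective φ := surjective_restrict_of_card_lt_wt_dual C s hs
  have hfiber : ∀ v, #{c | φ c = v} = #{c | φ c = 1} := fun v =>
    AddMonoidHom.card_fiber_eq_of_mem_range φ (hφ v) (hφ 1)
  have hone : #{c | φ c = 1} = #{c | c ∈ C ∧ ∀ i ∈ s, c i ≠ 0} := by
    have hbit : ∀ a : ZMod 2, a = 1 ↔ a ≠ 0 := by decide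
    rw [← Fintype.card_subtype, ← Fintype.card_subtype]
    refine Fintype.card_congr ((Equiv.subtypeEquivRight fun c => ?_).trans
      (Equiv.subtypeSubtypeEquivSubtypeInter (· ∈ C) fun c => ∀ i ∈ s, c i ≠ 0))
    simp [φ, funext_iff, LinearMap.funLeft, hbit]
  calc #{c | c ∈ C ∧ ∀ i ∈ s, c i ≠ 0} * 2 ^ #s
      = ∑ v : s → ZMod 2, #{c | φ c = v} := by
        rw [sum_congr rfl fun v _ => hfiber v, sum_const, card_univ, Fintype.card_fun, ZMod.card,
          Fintype.card_coe, smul_eq_mul, mul_comm, hone]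
    _ = Fintype.card C := (card_eq_sum_card_fiberwise fun _ _ => mem_univ _).symm

end Restriction

lemma eq_of_add_eq_add_of_mul_add_mul_eq {a b a' b' x y : ℕ} (hxy : x ≠ y) (h : a + b = a' + b')
    (h' : x * a + y * b = x * a' + y * b') : a = a' := by
  zify at h h' ⊢
  have hxy' : (x : ℤ) - y ≠ 0 := sub_ne_zero.2 (by exact_mod_cast hxy)
  exact mul_left_cancel₀ hxy' (by linear_combination h' - (y : ℤ) * h)

theorem eq_weights_of_ncard_eq_three_of_sub_mem {W : Set ℕ} {d n : ℕ} (hW : W.ncard = 3)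
    (hd0 : 0 < d) (hd : d ∈ W) (hn : n ∈ W) (hbound : ∀ x ∈ W, d ≤ x ∧ x ≤ n)
    (hsub : ∀ x ∈ W, x ≠ n → n - x ∈ W) :
    d < n ∧ d ≠ n - d ∧ ∀ x ∈ W, x = d ∨ x = n - d ∨ x = n := by
  obtain ⟨x, y, z, hxy, hxz, hyz, rfl⟩ := Set.ncard_eq_three.1 hW
  simp only [Set.mem_insert_iff, Set.mem_singleton_iff, forall_eq_or_imp, forall_eq] at *
  omega

section ComplementaryWeights

variable {ι : Type*} [Fintype ι]

structure HasComplementaryWeights (C : Submodule (ZMod 2) (ι → ZMod 2)) (w : ℕ) : Prop where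
  one_mem : (1 : ι → ZMod 2) ∈ C
  pos : 0 < w
  lt_card : w < Fintype.card ι
  ne_card_sub : w ≠ Fintype.card ι - w
  hammingNorm_eq : ∀ c ∈ C, c ≠ 0 →
    hammingNorm c = w ∨ hammingNorm c = Fintype.card ι - w ∨ hammingNorm c = Fintype.card ι

variable {C : Submodule (ZMod 2) (ι → ZMod 2)} {w : ℕ}

theorem HasComplementaryWeights.card_sub (hW : HasComplementaryWeights C w) :
    HasComplementaryWeights C (Fintype.card ι - w) where
  one_mem := hW.one_mem
  pos := Nat.sub_pos_of_lt hW.lt_card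
  lt_card := Nat.sub_lt (hW.pos.trans hW.lt_card) hW.pos
  ne_card_sub := by have := hW.lt_card; have := hW.ne_card_sub; omega
  hammingNorm_eq c hc hc0 := by
    have := hW.lt_card
    rcases hW.hammingNorm_eq c hc hc0 with h | h | h <;> omega

theorem hasComplementaryWeights_of_isMinDist {d : ℕ} (hd : IsMinDist (C : Set (ι → ZMod 2)) d)
    (h3 : numNonzeroWeights (C : Set (ι → ZMod 2)) = 3)
    (hall : weightCount (C : Set (ι → ZMod 2)) (Fintype.card ι) = 1) :
    HasComplementaryWeights C d := by
  set W := {i | 1 ≤ i ∧ weightCount (C : Set (ι → ZMod 2)) i ≠ 0}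
  have hmem : ∀ c ∈ C, c ≠ 0 → hammingNorm c ∈ W := fun c hc hc0 =>
    ⟨hammingNorm_pos_iff.2 hc0, (weightCount_ne_zero_iff _ _).2 ⟨c, hc, wt_eq_hammingNorm c⟩⟩
  have hwitness : ∀ x ∈ W, ∃ c ∈ C, c ≠ 0 ∧ hammingNorm c = x := fun x hx => by
    obtain ⟨c, hc, hcx⟩ := (weightCount_ne_zero_iff _ _).1 hx.2
    rw [wt_eq_hammingNorm] at hcx
    refine ⟨c, hc, fun h => ?_, hcx⟩
    rw [h, hammingNorm_zero] at hcx
    exact absurd hx.1 (by omega)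
  obtain ⟨⟨c₀, hc₀, hc₀0, hc₀d⟩, hmin⟩ := hd
  rw [wt_eq_hammingNorm] at hc₀d
  have hone : (1 : ι → ZMod 2) ∈ C := by
    obtain ⟨c, hc, hcn⟩ := (weightCount_ne_zero_iff _ _).1 (hall ▸ one_ne_zero)
    rwa [← eq_one_of_hammingNorm_eq_card (wt_eq_hammingNorm c ▸ hcn)]
  have hd0 : 0 < d := hc₀d ▸ hammingNorm_pos_iff.2 hc₀0
  have hdn : d ≤ Fintype.card ι := hc₀d ▸ hammingNorm_le_card_fintype
  obtain ⟨hlt, hne, hW⟩ := eq_weights_of_ncard_eq_three_of_sub_mem (W := W)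
    (by rwa [← Nat.card_coe_set_eq]) hd0 (hc₀d ▸ hmem c₀ hc₀ hc₀0)
    ⟨by omega, hall ▸ one_ne_zero⟩
    (fun x hx => by
      obtain ⟨c, hc, hc0, rfl⟩ := hwitness x hx
      exact ⟨wt_eq_hammingNorm c ▸ hmin c hc hc0, hammingNorm_le_card_fintype⟩)
    (fun x hx hxn => by
      obtain ⟨c, hc, hc0, rfl⟩ := hwitness x hx
      have hlt : hammingNorm c < Fintype.card ι := hammingNorm_le_card_fintype.lt_of_ne hxn
      rw [← hammingNorm_add_one]
      exact hmem _ (C.add_mem hc hone) (hammingNorm_pos_iff.1 (by rw [hammingNorm_add_one]; omega)))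
  exact ⟨hone, hd0, hlt, hne, fun c hc hc0 => hW _ (hmem c hc hc0)⟩

end ComplementaryWeights

section Codewords

variable {ι : Type*} [Fintype ι] [DecidableEq ι] (C : Submodule (ZMod 2) (ι → ZMod 2))
  [DecidablePred (· ∈ C)]

def codewords : Finset (ι → ZMod 2) := {c | c ∈ C}

@[simp]
lemma mem_codewords {c : ι → ZMod 2} : c ∈ codewords C ↔ c ∈ C := by simp [codewords]

theorem natCard_eq_card_coveringWords (w : ℕ) (p q : ι) :
    Nat.card {c : ι → ZMod 2 // c ∈ (C : Set (ι → ZMod 2)) ∧ wt c = w ∧ c p ≠ 0 ∧ c q ≠ 0} =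
      #(coveringWords (codewords C) w {p, q}) := by
  rw [Nat.card_eq_fintype_card, Fintype.card_subtype]
  congr 1
  ext c
  simp [coveringWords, wt_eq_hammingNorm]

theorem card_avoidingWords_eq_card_coveringWords (hone : (1 : ι → ZMod 2) ∈ C) {w : ℕ}
    (hw : w ≤ Fintype.card ι) (s : Finset ι) :
    #(avoidingWords (codewords C) w s) = #(coveringWords (codewords C) (Fintype.card ι - w) s) := by
  have hbit : ∀ a : ZMod 2, (a + 1 ≠ 0 ↔ a = 0) ∧ (a + 1 = 0 ↔ a ≠ 0) ∧ a + 1 + 1 = a := by decide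
  have hnorm := hammingNorm_add_one (ι := ι)
  refine card_nbij' (· + 1) (· + 1) ?_ ?_ ?_ ?_
  · intro c hc
    simp only [avoidingWords, coveringWords, mem_coe, mem_filter, mem_codewords,
      Pi.add_apply, Pi.one_apply, hbit] at hc ⊢
    exact ⟨C.add_mem hc.1 hone, by rw [hnorm, hc.2.1], hc.2.2⟩
  · intro c hc
    simp only [avoidingWords, coveringWords, mem_coe, mem_filter, mem_codewords,
      Pi.add_apply, Pi.one_apply, hbit] at hc ⊢
    exact ⟨C.add_mem hc.1 hone, by rw [hnorm, hc.2.1]; omega, hc.2.2⟩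
  all_goals exact fun c _ => funext fun i => (hbit (c i)).2.2

end Codewords

namespace HasComplementaryWeights

variable {ι : Type*} [Fintype ι] [DecidableEq ι] {C : Submodule (ZMod 2) (ι → ZMod 2)}
  [DecidablePred (· ∈ C)] {w : ℕ}

theorem card_forall_ne_zero (hW : HasComplementaryWeights C w) {s : Finset ι} (hs : s.Nonempty) :
    #{c | c ∈ C ∧ ∀ i ∈ s, c i ≠ 0} = #(coveringWords (codewords C) w s) +
      #(coveringWords (codewords C) (Fintype.card ι - w) s) + 1 := by
  set Y : Finset (ι → ZMod 2) := {c | c ∈ C ∧ ∀ i ∈ s, c i ≠ 0}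
  have hfiber : ∀ b, {c ∈ Y | hammingNorm c = b} = coveringWords (codewords C) b s := fun b => by
    ext c
    simp only [Y, coveringWords, mem_filter, mem_univ, true_and, mem_codewords]
    tauto
  have hall : coveringWords (codewords C) (Fintype.card ι) s = {1} := by
    ext c
    simp only [coveringWords, mem_filter, mem_codewords, mem_singleton]
    refine ⟨fun hc => eq_one_of_hammingNorm_eq_card hc.2.1, ?_⟩
    rintro rfl
    exact ⟨hW.one_mem, by simp [hammingNorm], by simp⟩
  have hne : w ≠ Fintype.card ι - w ∧ w ≠ Fintype.card ι ∧
      Fintype.card ι - w ≠ Fintype.card ι := by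
    have := hW.pos; have := hW.lt_card; have := hW.ne_card_sub; omega
  rw [card_eq_sum_card_fiberwise (f := hammingNorm) (t := {w, Fintype.card ι - w, Fintype.card ι}),
    sum_insert (by simp [hne.1, hne.2.1]), sum_insert (by simp [hne.2.2]), sum_singleton,
    hfiber, hfiber, hfiber, hall, card_singleton, add_assoc]
  intro c hc
  obtain ⟨i, hi⟩ := hs
  obtain ⟨hcC, hcs⟩ : c ∈ C ∧ ∀ i ∈ s, c i ≠ 0 := by simpa [Y] using hc
  have hc0 : c ≠ 0 := fun h => hcs i hi (by simp [h])
  simpa using hW.hammingNorm_eq c hcC hc0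

theorem card_coveringWords_add_mul_two_pow (hC : IsProjective (C : Set (ι → ZMod 2)))
    (hW : HasComplementaryWeights C w) {s : Finset ι} (hs : s.Nonempty) (hs2 : #s ≤ 2) :
    (#(coveringWords (codewords C) w s) + #(coveringWords (codewords C) (Fintype.card ι - w) s)
      + 1) * 2 ^ #s = Fintype.card C := by
  rw [← hW.card_forall_ne_zero hs]
  exact card_filter_forall_ne_zero_mul_two_pow C s fun x hx hx0 => hs2.trans_lt (hC x hx hx0)

theorem weighted_card_coveringWords_singleton (hC : IsProjective (C : Set (ι → ZMod 2)))
    (hW : HasComplementaryWeights C w) (p : ι) :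
    ((w - 1) * #(coveringWords (codewords C) w {p}) +
      (Fintype.card ι - w - 1) * #(coveringWords (codewords C) (Fintype.card ι - w) {p}) +
      (Fintype.card ι - 1)) * 4 = (Fintype.card ι - 1) * Fintype.card C := by
  have hpair : ∀ q ∈ ({p} : Finset ι)ᶜ, (#(coveringWords (codewords C) w (insert q {p})) +
      #(coveringWords (codewords C) (Fintype.card ι - w) (insert q {p})) + 1) * 4 =
      Fintype.card C := fun q hq => by
    have hqp : q ≠ p := by simpa using hq
    simpa [card_pair hqp] using
      hW.card_coveringWords_add_mul_two_pow hC (insert_nonempty q {p}) (card_insert_le _ _)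
  calc ((w - 1) * #(coveringWords (codewords C) w {p}) +
        (Fintype.card ι - w - 1) * #(coveringWords (codewords C) (Fintype.card ι - w) {p}) +
        (Fintype.card ι - 1)) * 4
      = ∑ q ∈ ({p} : Finset ι)ᶜ, (#(coveringWords (codewords C) w (insert q {p})) +
          #(coveringWords (codewords C) (Fintype.card ι - w) (insert q {p})) + 1) * 4 := by
        rw [← sum_mul, sum_add_distrib, sum_add_distrib, sum_card_coveringWords_insert,
          sum_card_coveringWords_insert, card_singleton, sum_const, card_compl, card_singleton,
          smul_eq_mul, mul_one]
    _ = (Fintype.card ι - 1) * Fintype.card C := by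
        rw [sum_congr rfl hpair, sum_const, card_compl, card_singleton, smul_eq_mul]

theorem card_coveringWords_singleton_eq (hC : IsProjective (C : Set (ι → ZMod 2)))
    (hW : HasComplementaryWeights C w) (p p' : ι) :
    #(coveringWords (codewords C) w {p}) = #(coveringWords (codewords C) w {p'}) := by
  have h := hW.card_coveringWords_add_mul_two_pow hC (singleton_nonempty p) (by simp)
  have h' := hW.card_coveringWords_add_mul_two_pow hC (singleton_nonempty p') (by simp)
  have hm := hW.weighted_card_coveringWords_singleton hC p
  have hm' := hW.weighted_card_coveringWords_singleton hC p'
  have := hW.pos; have := hW.lt_card; have := hW.ne_card_sub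
  rw [card_singleton] at h h'
  exact eq_of_add_eq_add_of_mul_add_mul_eq (x := w - 1) (y := Fintype.card ι - w - 1)
    (b := #(coveringWords (codewords C) (Fintype.card ι - w) {p}))
    (b' := #(coveringWords (codewords C) (Fintype.card ι - w) {p'})) (by omega) (by omega)
    (by omega)

theorem card_coveringWords_pair_eq (hC : IsProjective (C : Set (ι → ZMod 2)))
    (hW : HasComplementaryWeights C w) {p q p' q' : ι} (hpq : p ≠ q) (hpq' : p' ≠ q') :
    #(coveringWords (codewords C) w {p, q}) = #(coveringWords (codewords C) w {p', q'}) := by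
  have hm : Fintype.card ι - (Fintype.card ι - w) = w := Nat.sub_sub_self hW.lt_card.le
  -- Complementation identifies weight-`w` words covering `{p, q}` with weight-`(n - w)` words
  -- avoiding it, which inclusion–exclusion counts through constant point counts.
  have key : ∀ p q : ι, p ≠ q → (2 * #(coveringWords (codewords C) w {p, q}) + 1 +
      #(coveringWords (codewords C) (Fintype.card ι - w) {p}) +
      #(coveringWords (codewords C) (Fintype.card ι - w) {q})) * 4 =
      Fintype.card C + 4 * #(coveringWords (codewords C) (Fintype.card ι - w) ∅) :=
    fun p q hpq => by
      have hsize := hW.card_coveringWords_add_mul_two_pow hC (insert_nonempty p {q})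
        (card_insert_le _ _)
      have hcompl := card_avoidingWords_eq_card_coveringWords C hW.one_mem
        (w := Fintype.card ι - w) (Nat.sub_le _ _) {p, q}
      have hincl := card_avoidingWords_pair_add (codewords C) (Fintype.card ι - w) p q
      rw [card_pair hpq] at hsize
      rw [hm] at hcompl
      omega
  have hp := hW.card_sub.card_coveringWords_singleton_eq hC p p'
  have hq := hW.card_sub.card_coveringWords_singleton_eq hC q q'
  have := key p q hpq
  have := key p' q' hpq'
  omega

theorem card_coveringWords_empty_add_one_mul_two (hC : IsProjective (C : Set (ι → ZMod 2)))
    (hW : HasComplementaryWeights C w) :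
    (#(coveringWords (codewords C) w ∅) + 1) * 2 = Fintype.card C := by
  obtain ⟨p⟩ := Fintype.card_pos_iff.1 (hW.pos.trans hW.lt_card)
  have hsize := hW.card_coveringWords_add_mul_two_pow hC (singleton_nonempty p) (by simp)
  have hcompl := card_avoidingWords_eq_card_coveringWords C hW.one_mem hW.lt_card.le {p}
  have hsplit := card_avoidingWords_singleton_add (codewords C) w p
  rw [card_singleton, pow_one] at hsize
  omega

end HasComplementaryWeights

theorem HasComplementaryWeights.holdsTwoDesign {ι : Type*} [Fintype ι]
    {C : Submodule (ZMod 2) (ι → ZMod 2)} {w : ℕ} (hC : IsProjective (C : Set (ι → ZMod 2)))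
    (hW : HasComplementaryWeights C w) :
    ∃ lam : ℕ, HoldsTwoDesign (C : Set (ι → ZMod 2)) w lam ∧
      lam * (Fintype.card ι * (Fintype.card ι - 1)) =
        (2 ^ (Module.finrank (ZMod 2) C - 1) - 1) * (w * (w - 1)) := by
  classical
  obtain ⟨p₀, q₀, hpq₀⟩ := Fintype.exists_pair_of_one_lt_card (α := ι) (by
    have := hW.pos; have := hW.lt_card; omega)
  have hlam : ∀ p q, p ≠ q → #(coveringWords (codewords C) w {p, q}) =
      #(coveringWords (codewords C) w {p₀, q₀}) := fun p q hpq =>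
    hW.card_coveringWords_pair_eq hC hpq hpq₀
  refine ⟨_, fun p q hpq => (natCard_eq_card_coveringWords C w p q).trans (hlam p q hpq), ?_⟩
  have hclass := hW.card_coveringWords_empty_add_one_mul_two hC
  rw [Module.card_eq_pow_finrank (K := ZMod 2), ZMod.card] at hclass
  rw [card_mul_eq_of_card_coveringWords_pair _ _ hlam]
  congr 1
  generalize Module.finrank (ZMod 2) C = k at hclass ⊢
  obtain _ | k := k
  · omega
  · rw [pow_succ] at hclass
    rw [add_tsub_cancel_right]
    omega

theorem designs_from_projective_three_weight (n k d : ℕ) (C : Submodule (ZMod 2) (Fin n → ZMod 2))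
    (hk : Module.finrank (ZMod 2) C = k)
    (hd : IsMinDist (C : Set (Fin n → ZMod 2)) d)
    (hproj : IsProjective (C : Set (Fin n → ZMod 2)))
    (h3 : numNonzeroWeights (C : Set (Fin n → ZMod 2)) = 3)
    (hAn : weightCount (C : Set (Fin n → ZMod 2)) n = 1) :
    ∀ w ∈ ({d, n - d} : Set ℕ), ∃ lam : ℕ,
      HoldsTwoDesign (C : Set (Fin n → ZMod 2)) w lam ∧
      lam * (n * (n - 1)) = (2 ^ (k - 1) - 1) * (w * (w - 1)) := by
  have hW : HasComplementaryWeights C d :=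
    hasComplementaryWeights_of_isMinDist hd h3 (by rwa [Fintype.card_fin])
  have hW' : ∀ w ∈ ({d, n - d} : Set ℕ), HasComplementaryWeights C w := by
    rintro w (rfl | rfl)
    exacts [hW, by simpa using hW.card_sub]
  intro w hw
  obtain ⟨lam, hdesign, hlam⟩ := (hW' w hw).holdsTwoDesign hproj
  rw [Fintype.card_fin, hk] at hlam
  exact ⟨lam, hdesign, hlam⟩
end

section
/- For every odd integer m ≥ 5 there exists a binary projective three-weight linear code C_1 of length n = 2^{m−2} − 2^{(m−3)/2}, dimension m and minimum distance 2^{m−3} − 2^{(m−3)/2} with A_n(C_1) = 1. -/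
/-! Write `m = 2s + 1` and let `Q = x₁y₁ + ⋯ + x_sy_s` be the hyperbolic quadratic form on
`F₂^{2s}`. Take as coordinates the `2^{2s-1} - 2^{s-1}` points `x` with `Q x = 1` and as codewords
the affine functions `x ↦ u·x + ε` restricted to them. Factoring the character sums
`∑ₓ (-1)^{Q x + u·x} = 2^s (-1)^{Q u}` over the `s` hyperbolic pairs shows that for `u ≠ 0`
exactly `2^{2s-2} - [c = Q u] 2^{s-1}` of these points have `u·x = c`. So the nonzero codewords
have weights `2^{2s-2} - 2^{s-1}`, `2^{2s-2}` and, for the all-one word alone, the length. The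
code contains the all-one word and separates points, so its dual has no word of weight `1` or `2`.
-/

open Finset

theorem ZMod.eq_one_of_ne_zero {a : ZMod 2} (h : a ≠ 0) : a = 1 := by
  revert a; decide

section BinaryCode

variable {ι : Type*}

def nonzeroWeights (C : Set (ι → ZMod 2)) : Set ℕ := {w | ∃ c ∈ C, c ≠ 0 ∧ wt c = w}

theorem isMinDist_iff_isLeast {C : Set (ι → ZMod 2)} {d : ℕ} :
    IsMinDist C d ↔ IsLeast (nonzeroWeights C) d := by
  simp only [IsMinDist, IsLeast, lowerBounds, nonzeroWeights, Set.mem_ofPred_eq]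
  refine and_congr Iff.rfl ⟨fun h w ⟨c, hc, hc0, hw⟩ => hw ▸ h c hc hc0,
    fun h c hc hc0 => h ⟨c, hc, hc0, rfl⟩⟩

theorem weightCount_eq_one {C : Set (ι → ZMod 2)} {c : ι → ZMod 2} (hc : c ∈ C)
    (huniq : ∀ c' ∈ C, wt c' = wt c → c' = c) : weightCount C (wt c) = 1 :=
  Nat.card_eq_one_iff_unique.mpr
    ⟨⟨fun a b => Subtype.ext ((huniq a a.2.1 a.2.2).trans (huniq b b.2.1 b.2.2).symm)⟩,
      ⟨⟨c, hc, rfl⟩⟩⟩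

variable [Fintype ι]

theorem wt_eq_card_filter (c : ι → ZMod 2) : wt c = #{i | c i ≠ 0} := by
  classical
  rw [wt, Nat.card_eq_fintype_card, Fintype.card_subtype]

theorem wt_eq_zero_iff {c : ι → ZMod 2} : wt c = 0 ↔ c = 0 := by
  classical
  simp [wt_eq_card_filter, filter_eq_empty_iff, funext_iff]

theorem numNonzeroWeights_eq_ncard (C : Set (ι → ZMod 2)) :
    numNonzeroWeights C = (nonzeroWeights C).ncard := by
  rw [numNonzeroWeights, Nat.card_coe_set_eq]
  congr 1
  ext w
  constructor
  · rintro ⟨hw, hne⟩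
    obtain ⟨⟨c, hc, rfl⟩⟩ : Nonempty {c // c ∈ C ∧ wt c = w} :=
      (Nat.card_ne_zero.mp hne).1
    exact ⟨c, hc, fun h => by simp [h, wt_eq_zero_iff.mpr] at hw, rfl⟩
  · rintro ⟨c, hc, hc0, rfl⟩
    exact ⟨Nat.one_le_iff_ne_zero.mpr (wt_eq_zero_iff.not.mpr hc0),
      Nat.card_ne_zero.mpr ⟨⟨c, hc, rfl⟩, inferInstance⟩⟩

theorem wt_mem_nonzeroWeights {C : Set (ι → ZMod 2)} {c : ι → ZMod 2} (hc : c ∈ C)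
    (hc0 : wt c ≠ 0) : wt c ∈ nonzeroWeights C :=
  ⟨c, hc, fun h => hc0 (wt_eq_zero_iff.mpr h), rfl⟩

theorem finsum_mul_eq_sum_support [DecidableEq ι] (x c : ι → ZMod 2) :
    ∑ᶠ i, x i * c i = ∑ i ∈ {i | x i ≠ 0}, c i := by
  rw [finsum_eq_sum_of_fintype, sum_filter, ← sum_congr rfl]
  intro i _
  split_ifs with h
  · rw [ZMod.eq_one_of_ne_zero h, one_mul]
  · rw [not_not.mp h, zero_mul]

/-- A dual word of weight `≤ 2` is orthogonal to `1` only if its weight is `2`, say its support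
is `{p, q}`; orthogonality to the rest of `C` then says `c p = c q` for all `c ∈ C`. -/
theorem isProjective_of_one_mem {C : Set (ι → ZMod 2)} (hone : 1 ∈ C)
    (hsep : ∀ p q, p ≠ q → ∃ c ∈ C, c p ≠ c q) : IsProjective C := by
  classical
  intro x hx hx0
  by_contra! hlt
  set T : Finset ι := {i | x i ≠ 0}
  have hT : ∀ c ∈ C, ∑ i ∈ T, c i = 0 := fun c hc =>
    finsum_mul_eq_sum_support x c ▸ hx c hc
  have hT0 : #T ≠ 0 := by rwa [← wt_eq_card_filter, Ne, wt_eq_zero_iff]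
  have hTeven : 2 ∣ #T := by
    simpa [ZMod.natCast_eq_zero_iff] using hT 1 hone
  have hT3 : #T < 3 := wt_eq_card_filter x ▸ hlt
  obtain ⟨p, q, hpq, hTpq⟩ := card_eq_two.mp (by omega : #T = 2)
  obtain ⟨c, hc, hcpq⟩ := hsep p q hpq
  have hsum := hT c hc
  rw [hTpq, sum_pair hpq] at hsum
  exact hcpq (by simpa [add_eq_zero_iff_eq_neg] using hsum)

end BinaryCode

namespace Hyperbolic

abbrev Space (s : ℕ) := Fin s → ZMod 2 × ZMod 2

variable {s : ℕ}

def quad (x : Space s) : ZMod 2 := ∑ j, (x j).1 * (x j).2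

def dot (u x : Space s) : ZMod 2 := ∑ j, ((u j).1 * (x j).1 + (u j).2 * (x j).2)

@[simp] theorem dot_zero_left (x : Space s) : dot 0 x = 0 := by simp [dot]

@[simp] theorem quad_zero : quad (0 : Space s) = 0 := by simp [quad]

theorem dot_add_left (u v x : Space s) : dot (u + v) x = dot u x + dot v x := by
  simp only [dot, ← sum_add_distrib, Pi.add_apply, Prod.fst_add, Prod.snd_add]
  exact sum_congr rfl fun _ _ => by ring

theorem dot_smul_left (a : ZMod 2) (u x : Space s) : dot (a • u) x = a * dot u x := by
  simp only [dot, mul_sum, Pi.smul_apply, Prod.smul_fst, Prod.smul_snd, smul_eq_mul]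
  exact sum_congr rfl fun _ _ => by ring

theorem exists_dot_ne {x y : Space s} (h : x ≠ y) : ∃ u, dot u x ≠ dot u y := by
  obtain ⟨j, hj⟩ := Function.ne_iff.mp h
  have hdot : ∀ a z, dot (Pi.single j a) z = a.1 * (z j).1 + a.2 * (z j).2 := fun a z => by
    rw [dot, sum_eq_single j (fun k _ hk => by simp [Pi.single_eq_of_ne hk]) (by simp)]
    simp
  rcases not_and_or.mp (mt Prod.ext_iff.mpr hj) with h1 | h2
  · exact ⟨Pi.single j (1, 0), by simpa [hdot]⟩
  · exact ⟨Pi.single j (0, 1), by simpa [hdot]⟩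

def chi (a : ZMod 2) : ℤ := if a = 0 then 1 else -1

@[simp] theorem chi_zero : chi 0 = 1 := rfl

theorem chi_mul_chi (a b : ZMod 2) : chi a * chi b = if a = b then 1 else -1 := by
  revert a b; decide

theorem chi_add (a b : ZMod 2) : chi (a + b) = chi a * chi b := by revert a b; decide

theorem chi_sum {α : Type*} (t : Finset α) (f : α → ZMod 2) :
    chi (∑ j ∈ t, f j) = ∏ j ∈ t, chi (f j) := by
  classical
  induction t using Finset.induction with
  | empty => rfl
  | insert _ _ h ih => rw [sum_insert h, prod_insert h, chi_add, ih]

theorem sum_chi_sum_apply {A : Type*} [Fintype A] (f : Fin s → A → ZMod 2) :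
    ∑ x : Fin s → A, chi (∑ j, f j (x j)) = ∏ j, ∑ a, chi (f j a) := by
  simp only [chi_sum]
  exact (Fintype.prod_sum fun j a => chi (f j a)).symm

theorem sum_chi_quad_add_dot (u : Space s) :
    ∑ x : Space s, chi (quad x + dot u x) = 2 ^ s * chi (quad u) := by
  have hpair : ∀ p : ZMod 2 × ZMod 2,
      ∑ a : ZMod 2 × ZMod 2, chi (a.1 * a.2 + (p.1 * a.1 + p.2 * a.2))
        = 2 * chi (p.1 * p.2) := by
    decide
  simp only [quad, dot, ← sum_add_distrib]
  rw [sum_chi_sum_apply fun j (a : ZMod 2 × ZMod 2) => a.1 * a.2 + ((u j).1 * a.1 + (u j).2 * a.2),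
    chi_sum]
  simp only [hpair, prod_mul_distrib, prod_const, card_univ, Fintype.card_fin]

theorem sum_chi_dot {u : Space s} (hu : u ≠ 0) : ∑ x : Space s, chi (dot u x) = 0 := by
  obtain ⟨j, hj⟩ := Function.ne_iff.mp hu
  have hpair : ∀ p : ZMod 2 × ZMod 2, p ≠ 0 →
      ∑ a : ZMod 2 × ZMod 2, chi (p.1 * a.1 + p.2 * a.2) = 0 := by
    decide
  simp only [dot]
  rw [sum_chi_sum_apply fun j (a : ZMod 2 × ZMod 2) => (u j).1 * a.1 + (u j).2 * a.2]
  exact prod_eq_zero (mem_univ j) (hpair _ hj)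

def quadOneCount (u : Space s) (c : ZMod 2) : ℕ := #{x | quad x = 1 ∧ dot u x = c}

theorem four_mul_quadOneCount (u : Space s) (c : ZMod 2) :
    4 * (quadOneCount u c : ℤ)
      = 4 ^ s - 2 ^ s + chi c * ∑ x, chi (dot u x) - chi c * (2 ^ s * chi (quad u)) := by
  have hind : ∀ q l : ZMod 2, 4 * (if q = 1 ∧ l = c then 1 else 0 : ℤ)
      = 1 - chi q + chi c * chi l - chi c * chi (q + l) := by
    revert c; decide
  rw [quadOneCount, natCast_card_filter, mul_sum]
  simp only [hind, sum_sub_distrib, sum_add_distrib, ← mul_sum, sum_chi_quad_add_dot]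
  have hquad : ∑ x : Space s, chi (quad x) = 2 ^ s := by
    simpa using sum_chi_quad_add_dot (0 : Space s)
  simp [hquad]

theorem two_pow_bounds {t : ℕ} (ht : 1 ≤ t) :
    0 < 2 ^ t ∧ 2 ^ t < 2 ^ (2 * t) ∧ 2 ^ (2 * t + 1) = 2 * 2 ^ (2 * t) :=
  ⟨by positivity, Nat.pow_lt_pow_right one_lt_two (by omega), pow_succ' 2 (2 * t)⟩

theorem four_pow_eq (t : ℕ) : (4 : ℤ) ^ t = 2 ^ (2 * t) := by
  rw [pow_mul]; norm_num

theorem quadOneCount_add_ite {t : ℕ} {u : Space (t + 1)} (hu : u ≠ 0) (c : ZMod 2) :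
    quadOneCount u c + (if c = quad u then 2 ^ t else 0) = 2 ^ (2 * t) := by
  have h := four_mul_quadOneCount u c
  rw [sum_chi_dot hu, mul_zero, add_zero, mul_left_comm, chi_mul_chi, pow_succ 4, four_pow_eq,
    pow_succ 2] at h
  zify
  split_ifs at h ⊢ <;> linarith

abbrev QuadOne (s : ℕ) := {x : Space s // quad x = 1}

theorem card_quadOne_eq_quadOneCount :
    Fintype.card (QuadOne s) = quadOneCount (0 : Space s) 0 := by
  simp [Fintype.card_subtype, quadOneCount]

theorem card_quadOne (t : ℕ) : Fintype.card (QuadOne (t + 1)) = 2 ^ (2 * t + 1) - 2 ^ t := by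
  have h := four_mul_quadOneCount (0 : Space (t + 1)) 0
  rw [card_quadOne_eq_quadOneCount, pow_succ 2 (2 * t)]
  norm_num [pow_succ] at h
  rw [four_pow_eq] at h
  have hle : 2 ^ t ≤ 2 ^ (2 * t) * 2 :=
    le_mul_of_le_of_one_le (Nat.pow_le_pow_right two_pos (by omega)) one_le_two
  zify [hle]
  linarith

section QuadOneCode

variable {ι : Type*}

def affineEval (f : ι → Space s) : Space s × ZMod 2 →ₗ[ZMod 2] ι → ZMod 2 where
  toFun p i := dot p.1 (f i) + p.2
  map_add' p q := funext fun i => by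
    simp only [Prod.fst_add, Prod.snd_add, dot_add_left, Pi.add_apply]; ring
  map_smul' a p := funext fun i => by
    simp only [Prod.smul_fst, Prod.smul_snd, dot_smul_left, Pi.smul_apply, smul_eq_mul,
      RingHom.id_apply]
    ring

@[simp] theorem affineEval_apply (f : ι → Space s) (u : Space s) (ε : ZMod 2) (i : ι) :
    affineEval f (u, ε) i = dot u (f i) + ε := rfl

/-- The first-order Reed–Muller code of length `2 ^ (2 * s)` punctured to the points where the
hyperbolic form takes the value `1`; `e` orders these points. -/
def quadOneCode (e : ι ≃ QuadOne s) : Submodule (ZMod 2) (ι → ZMod 2) :=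
  LinearMap.range (affineEval (Subtype.val ∘ e))

theorem wt_affineEval [Fintype ι] (e : ι ≃ QuadOne s) (u : Space s) (ε : ZMod 2) :
    wt (affineEval (Subtype.val ∘ e) (u, ε)) = quadOneCount u (ε + 1) := by
  have hne : ∀ a : ZMod 2, a + ε ≠ 0 ↔ a = ε + 1 := by revert ε; decide
  calc wt (affineEval (Subtype.val ∘ e) (u, ε))
      = Nat.card {x : QuadOne s // dot u x = ε + 1} :=
        Nat.card_congr (e.subtypeEquiv fun i => by simp [hne])
    _ = Nat.card {x : Space s // quad x = 1 ∧ dot u x = ε + 1} :=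
        Nat.card_congr (Equiv.subtypeSubtypeEquivSubtypeInter (fun x : Space s => quad x = 1)
          (fun x => dot u x = ε + 1))
    _ = quadOneCount u (ε + 1) := by
        rw [Nat.card_eq_fintype_card, Fintype.card_subtype, quadOneCount]

theorem affineEval_zero_one (f : ι → Space s) : affineEval f (0, 1) = 1 := by
  ext; simp

variable [Fintype ι] {t : ℕ} (e : ι ≃ QuadOne (t + 1))

theorem wt_affineEval_of_ne_zero {u : Space (t + 1)} (hu : u ≠ 0) (ε : ZMod 2) :
    wt (affineEval (Subtype.val ∘ e) (u, ε))
      = if ε + 1 = quad u then 2 ^ (2 * t) - 2 ^ t else 2 ^ (2 * t) := by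
  have h := quadOneCount_add_ite hu (ε + 1)
  rw [wt_affineEval]
  split_ifs at h ⊢ <;> omega

theorem wt_affineEval_zero_one :
    wt (affineEval (Subtype.val ∘ e) (0, 1)) = 2 ^ (2 * t + 1) - 2 ^ t := by
  rw [wt_affineEval, show (1 + 1 : ZMod 2) = 0 from rfl, ← card_quadOne_eq_quadOneCount,
    card_quadOne]

theorem wt_affineEval_mem {p : Space (t + 1) × ZMod 2} (hp : p ≠ 0) :
    wt (affineEval (Subtype.val ∘ e) p)
      ∈ ({2 ^ (2 * t) - 2 ^ t, 2 ^ (2 * t), 2 ^ (2 * t + 1) - 2 ^ t} : Set ℕ) := by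
  obtain ⟨u, ε⟩ := p
  by_cases hu : u = 0
  · subst hu
    obtain rfl : ε = 1 := ZMod.eq_one_of_ne_zero fun h => hp (by rw [h, Prod.mk_zero_zero])
    simp [wt_affineEval_zero_one]
  · rw [wt_affineEval_of_ne_zero e hu]
    split_ifs <;> simp

theorem affineEval_injective (ht : 1 ≤ t) :
    Function.Injective (affineEval (Subtype.val ∘ e)) := by
  refine (injective_iff_map_eq_zero _).mpr fun p hp => by_contra fun hp0 => ?_
  have hmem := wt_affineEval_mem e hp0
  obtain ⟨hpos, hlt, hsucc⟩ := two_pow_bounds ht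
  rw [hp, wt_eq_zero_iff.mpr rfl] at hmem
  simp only [Set.mem_insert_iff, Set.mem_singleton_iff] at hmem
  omega

theorem finrank_quadOneCode (ht : 1 ≤ t) :
    Module.finrank (ZMod 2) (quadOneCode e) = 2 * t + 3 := by
  rw [quadOneCode, LinearMap.finrank_range_of_inj (affineEval_injective e ht)]
  simp [Module.finrank_pi_fintype]
  ring

theorem isProjective_quadOneCode : IsProjective (quadOneCode e : Set (ι → ZMod 2)) := by
  refine isProjective_of_one_mem ⟨(0, 1), affineEval_zero_one _⟩ fun p q hpq => ?_
  obtain ⟨u, hu⟩ := exists_dot_ne (Subtype.val_injective.ne (e.injective.ne hpq))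
  exact ⟨_, ⟨(u, 0), rfl⟩, by simpa⟩

theorem nonzeroWeights_quadOneCode (ht : 1 ≤ t) :
    nonzeroWeights (quadOneCode e : Set (ι → ZMod 2))
      = {2 ^ (2 * t) - 2 ^ t, 2 ^ (2 * t), 2 ^ (2 * t + 1) - 2 ^ t} := by
  obtain ⟨hpos, hlt, hsucc⟩ := two_pow_bounds ht
  ext w
  constructor
  · rintro ⟨_, ⟨p, rfl⟩, hc0, rfl⟩
    exact wt_affineEval_mem e (by rintro rfl; exact hc0 (map_zero _))
  · obtain ⟨u, hu⟩ := exists_ne (0 : Space (t + 1))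
    have hchar : ∀ a : ZMod 2, a + 1 + 1 = a ∧ a + 1 ≠ a := by decide
    rintro (rfl | rfl | rfl)
    · have h := wt_affineEval_of_ne_zero e hu (quad u + 1)
      rw [if_pos (hchar _).1] at h
      rw [← h]
      exact wt_mem_nonzeroWeights ⟨_, rfl⟩ (by omega)
    · have h := wt_affineEval_of_ne_zero e hu (quad u)
      rw [if_neg (hchar _).2] at h
      rw [← h]
      exact wt_mem_nonzeroWeights ⟨_, rfl⟩ (by omega)
    · rw [← wt_affineEval_zero_one e]
      exact wt_mem_nonzeroWeights ⟨_, rfl⟩ (by rw [wt_affineEval_zero_one e]; omega)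

theorem weightCount_quadOneCode (ht : 1 ≤ t) :
    weightCount (quadOneCode e : Set (ι → ZMod 2)) (2 ^ (2 * t + 1) - 2 ^ t) = 1 := by
  obtain ⟨hpos, hlt, hsucc⟩ := two_pow_bounds ht
  rw [← wt_affineEval_zero_one e]
  refine weightCount_eq_one ⟨_, rfl⟩ ?_
  rintro _ ⟨⟨u, ε⟩, rfl⟩ hw
  rw [wt_affineEval_zero_one e] at hw
  by_cases hu : u = 0
  · subst hu
    by_cases hε : ε = 0
    · rw [hε, Prod.mk_zero_zero, map_zero, wt_eq_zero_iff.mpr rfl] at hw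
      omega
    · rw [ZMod.eq_one_of_ne_zero hε]
  · rw [wt_affineEval_of_ne_zero e hu] at hw
    split_ifs at hw <;> omega

end QuadOneCode

end Hyperbolic

open Hyperbolic in
theorem exists_three_weight_code_minus (m : ℕ) (hm : 5 ≤ m) (hmodd : Odd m) :
    ∃ C : Submodule (ZMod 2) (Fin (2 ^ (m - 2) - 2 ^ ((m - 3) / 2)) → ZMod 2),
      Module.finrank (ZMod 2) C = m ∧
      IsMinDist (C : Set (Fin (2 ^ (m - 2) - 2 ^ ((m - 3) / 2)) → ZMod 2))
        (2 ^ (m - 3) - 2 ^ ((m - 3) / 2)) ∧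
      IsProjective (C : Set (Fin (2 ^ (m - 2) - 2 ^ ((m - 3) / 2)) → ZMod 2)) ∧
      numNonzeroWeights (C : Set (Fin (2 ^ (m - 2) - 2 ^ ((m - 3) / 2)) → ZMod 2)) = 3 ∧
      weightCount (C : Set (Fin (2 ^ (m - 2) - 2 ^ ((m - 3) / 2)) → ZMod 2))
        (2 ^ (m - 2) - 2 ^ ((m - 3) / 2)) = 1 := by
  obtain ⟨t, rfl⟩ : ∃ t, m = 2 * t + 3 := by
    obtain ⟨k, rfl⟩ := hmodd
    exact ⟨k - 1, by omega⟩
  have ht : 1 ≤ t := by omega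
  rw [show 2 * t + 3 - 2 = 2 * t + 1 by omega, show (2 * t + 3 - 3) / 2 = t by omega,
    show 2 * t + 3 - 3 = 2 * t by omega]
  let e := (Fintype.equivFinOfCardEq (card_quadOne t)).symm
  obtain ⟨hpos, hlt, hsucc⟩ := two_pow_bounds ht
  refine ⟨quadOneCode e, finrank_quadOneCode e ht, ?_, isProjective_quadOneCode e, ?_,
    weightCount_quadOneCode e ht⟩
  · rw [isMinDist_iff_isLeast, nonzeroWeights_quadOneCode e ht]
    exact ⟨Or.inl rfl, by rintro _ (rfl | rfl | rfl) <;> omega⟩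
  · rw [numNonzeroWeights_eq_ncard, nonzeroWeights_quadOneCode e ht]
    exact Set.ncard_eq_three.mpr ⟨_, _, _, by omega, by omega, by omega, rfl⟩
end
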